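/- Let (X, 𝒜, μ) be a probability space, ι a finite nonempty type, α ∈ [0, 1), δ ≥ 0, Ω ≥ 1, β ∈ [0, 1], q > 0, and t ≥ Ω. For each x ∈ X let (p_r(x))_{r ≥ t−Ω} be strictly positive probability distributions on ι satisfying KL(p_r(x) ‖ p_{r−1}(x)) ≤ δ for all r ∈ {t−Ω+1, …, t} and TV(p_{r+1}(x), p_r(x)) ≤ α·TV(p_r(x), p_{r−1}(x)) for all r ≥ t. For each x let i*(x) be a strict maximizer of p_t(x) and M(x) = p_t(x)(i*(x)) − max_{j ≠ i*(x)} p_t(x)(j) its top-2 margin. Suppose Ω·√(δ/2) + (1/(1 − α))·√(δ/2) < q/2, the set E = {x : M(x) ≥ q} is measurable with μ(E) ≥ 1 − β, and the set A = {x : for all s ≥ 0, i*(x) is the unique maximizer of p_{t+s}(x)} is measurable. Then μ(A) ≥ 1 − β. -/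

import Mathlib

/-- A probability distribution on a finite type: nonnegative and sums to 1. -/
def IsProbDist {ι : Type*} [Fintype ι] (p : ι → ℝ) : Prop :=
  (∀ i, 0 ≤ p i) ∧ ∑ i, p i = 1

/-- Total variation distance between two functions on a finite type. -/
noncomputable def TV {ι : Type*} [Fintype ι] (p q : ι → ℝ) : ℝ :=
  (1 / 2) * ∑ i, |p i - q i|

/-- Kullback–Leibler divergence on a finite type (terms with `p i = 0` contribute `0`,
since `Real.log 0 = 0`). -/
noncomputable def KL {ι : Type*} [Fintype ι] (p q : ι → ℝ) : ℝ :=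
  ∑ i, p i * Real.log (p i / q i)


lemma aux_log (r : ℝ) (hr : 0 < r) : 0 ≤ Real.log r + 1/r - 1 := by
  have h := Real.log_le_sub_one_of_pos (show (0:ℝ) < 1/r by positivity)
  rw [one_div, Real.log_inv] at h
  rw [one_div]
  linarith

lemma g_hasDeriv (r : ℝ) (hr : 0 < r) :
    HasDerivAt (fun s : ℝ => (4*s+4)*Real.log s - 8*(s-1))
      (4*Real.log r + (4*r+4)/r - 8) r := by
  have h1 : HasDerivAt (fun s : ℝ => 4*s+4) 4 r := by
    simpa using ((hasDerivAt_id r).const_mul 4).add_const 4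
  have h2 := Real.hasDerivAt_log hr.ne'
  have h4 : HasDerivAt (fun s : ℝ => 8*(s-1)) 8 r := by
    simpa using ((hasDerivAt_id r).sub_const 1).const_mul 8
  have h3 := (h1.mul h2).sub h4
  rw [div_eq_mul_inv]
  exact h3

lemma g_mono : MonotoneOn (fun s : ℝ => (4*s+4)*Real.log s - 8*(s-1)) (Set.Ioi 0) := by
  have hi : interior (Set.Ioi (0:ℝ)) = Set.Ioi 0 := isOpen_Ioi.interior_eq
  apply monotoneOn_of_deriv_nonneg (convex_Ioi 0)
  · intro x hx
    exact (g_hasDeriv x hx).continuousAt.continuousWithinAt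
  · rw [hi]
    intro x hx
    exact (g_hasDeriv x hx).differentiableAt.differentiableWithinAt
  · rw [hi]
    intro x hx
    rw [(g_hasDeriv x hx).deriv]
    have h0 := aux_log x hx
    have hx0 : (0:ℝ) < x := hx
    have h2 : (4*x+4)/x = 4 + 4*(1/x) := by
      field_simp
    rw [h2]
    linarith

noncomputable def hfun (s : ℝ) : ℝ := (s*Real.log s - s + 1)*(2*s+4) - 3*(s-1)^2

lemma h_hasDeriv (r : ℝ) (hr : 0 < r) :
    HasDerivAt hfun ((4*r+4)*Real.log r - 8*(r-1)) r := by
  have h1 : HasDerivAt (fun s : ℝ => s*Real.log s - s + 1) (Real.log r) r := by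
    have ha := (hasDerivAt_id r).mul (Real.hasDerivAt_log hr.ne')
    have hb := (ha.sub (hasDerivAt_id r)).add_const 1
    have heq : 1 * Real.log r + r * r⁻¹ - 1 = Real.log r := by
      rw [mul_inv_cancel₀ hr.ne']; ring
    rw [← heq]
    exact hb
  have h2 : HasDerivAt (fun s : ℝ => 2*s+4) 2 r := by
    simpa using ((hasDerivAt_id r).const_mul 2).add_const 4
  have h3 : HasDerivAt (fun s : ℝ => 3*(s-1)^2) (3*(2*(r-1))) r := by
    have := (((hasDerivAt_id r).sub_const 1).pow 2).const_mul 3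
    simpa using this
  have h4 := (h1.mul h2).sub h3
  have heq : Real.log r * (2*r+4) + (r*Real.log r - r + 1)*2 - 3*(2*(r-1))
      = (4*r+4)*Real.log r - 8*(r-1) := by ring
  rw [← heq]
  exact h4

lemma g_one : (fun s : ℝ => (4*s+4)*Real.log s - 8*(s-1)) 1 = 0 := by simp

lemma h_one : hfun 1 = 0 := by simp [hfun]

lemma h_nonneg (r : ℝ) (hr : 0 < r) : 0 ≤ hfun r := by
  rcases le_total 1 r with h1 | h1
  · have mono : MonotoneOn hfun (Set.Ici 1) := by
      apply monotoneOn_of_deriv_nonneg (convex_Ici 1)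
      · intro x hx
        exact (h_hasDeriv x (lt_of_lt_of_le one_pos hx)).continuousAt.continuousWithinAt
      · rw [interior_Ici]
        intro x hx
        exact (h_hasDeriv x (lt_trans one_pos hx)).differentiableAt.differentiableWithinAt
      · rw [interior_Ici]
        intro x hx
        have hx0 : (0:ℝ) < x := lt_trans one_pos hx
        rw [(h_hasDeriv x hx0).deriv]
        have := g_mono (Set.mem_Ioi.2 one_pos) (Set.mem_Ioi.2 hx0) (le_of_lt hx)
        rw [g_one] at this
        exact this
    have := mono (Set.mem_Ici.2 le_rfl) (Set.mem_Ici.2 h1) h1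
    rw [h_one] at this
    exact this
  · have anti : AntitoneOn hfun (Set.Ioc 0 1) := by
      apply antitoneOn_of_deriv_nonpos (convex_Ioc 0 1)
      · intro x hx
        exact (h_hasDeriv x hx.1).continuousAt.continuousWithinAt
      · rw [interior_Ioc]
        intro x hx
        exact (h_hasDeriv x hx.1).differentiableAt.differentiableWithinAt
      · rw [interior_Ioc]
        intro x hx
        rw [(h_hasDeriv x hx.1).deriv]
        have := g_mono (Set.mem_Ioi.2 hx.1) (Set.mem_Ioi.2 one_pos) (le_of_lt hx.2)
        rw [g_one] at this
        exact this
    have := anti (Set.mem_Ioc.2 ⟨hr, h1⟩) (Set.mem_Ioc.2 ⟨one_pos, le_rfl⟩) h1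
    rw [h_one] at this
    exact this

lemma key_ineq (x y : ℝ) (hx : 0 < x) (hy : 0 < y) :
    3*(x-y)^2 / (2*x+4*y) ≤ x * Real.log (x/y) - x + y := by
  have hr : 0 < x/y := by positivity
  have h0 := h_nonneg (x/y) hr
  rw [hfun] at h0
  rw [div_le_iff₀ (by positivity)]
  have goal_eq : (x * Real.log (x/y) - x + y)*(2*x+4*y) - 3*(x-y)^2
      = y^2 * ((x/y * Real.log (x/y) - x/y + 1)*(2*(x/y)+4) - 3*(x/y-1)^2) := by
    field_simp
  nlinarith [mul_nonneg (sq_nonneg y) h0]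

lemma pinsker {ι : Type*} [Fintype ι] (p q : ι → ℝ) (hp : IsProbDist p) (hq : IsProbDist q)
    (hpp : ∀ i, 0 < p i) (hqp : ∀ i, 0 < q i) : TV p q ≤ Real.sqrt (KL p q / 2) := by
  have hKLsum : ∑ i, (3*(p i - q i)^2 / (2*p i + 4*q i)) ≤ KL p q := by
    have hrw : KL p q = ∑ i, (p i * Real.log (p i / q i) - p i + q i) := by
      rw [KL, Finset.sum_add_distrib, Finset.sum_sub_distrib, hp.2, hq.2]
      ring
    rw [hrw]
    exact Finset.sum_le_sum fun i _ => key_ineq (p i) (q i) (hpp i) (hqp i)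
  have hKL0 : 0 ≤ KL p q := by
    refine le_trans (Finset.sum_nonneg fun i _ => ?_) hKLsum
    have : 0 < 2*p i + 4*q i := by have := hpp i; have := hqp i; linarith
    positivity
  have hden : ∀ i ∈ (Finset.univ : Finset ι), 0 < (2*p i + 4*q i)/3 := by
    intro i _
    have := hpp i; have := hqp i
    positivity
  have hCS := Finset.sq_sum_div_le_sum_sq_div Finset.univ (fun i => |p i - q i|) hden
  have hsum2 : ∑ i, (2*p i + 4*q i)/3 = 2 := by
    rw [← Finset.sum_div, Finset.sum_add_distrib, ← Finset.mul_sum, ← Finset.mul_sum,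
      hp.2, hq.2]
    norm_num
  have heq : ∀ i, |p i - q i|^2 / ((2*p i + 4*q i)/3) = 3*(p i - q i)^2/(2*p i + 4*q i) := by
    intro i
    have h1 : (0:ℝ) < 2*p i + 4*q i := by have := hpp i; have := hqp i; linarith
    rw [sq_abs, div_div_eq_mul_div]
    ring_nf
  rw [hsum2] at hCS
  simp only [heq] at hCS
  have hS : (∑ i, |p i - q i|)^2 ≤ 2 * KL p q := by
    have h2 := le_trans hCS hKLsum
    rw [div_le_iff₀ (by norm_num : (0:ℝ) < 2)] at h2
    linarith
  have hTV0 : 0 ≤ TV p q := by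
    rw [TV]
    have : 0 ≤ ∑ i, |p i - q i| := Finset.sum_nonneg fun i _ => abs_nonneg _
    linarith
  rw [Real.le_sqrt hTV0 (by linarith : (0:ℝ) ≤ KL p q / 2), TV]
  rw [mul_pow]
  nlinarith [hS]

lemma TV_nonneg {ι : Type*} [Fintype ι] (p q : ι → ℝ) : 0 ≤ TV p q := by
  rw [TV]
  have : 0 ≤ ∑ i, |p i - q i| := Finset.sum_nonneg fun i _ => abs_nonneg _
  linarith

lemma TV_self {ι : Type*} [Fintype ι] (p : ι → ℝ) : TV p p = 0 := by
  simp [TV]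

lemma TV_triangle {ι : Type*} [Fintype ι] (p q r : ι → ℝ) : TV p r ≤ TV p q + TV q r := by
  rw [TV, TV, TV, ← mul_add, ← Finset.sum_add_distrib]
  have : ∑ i, |p i - r i| ≤ ∑ i, (|p i - q i| + |q i - r i|) :=
    Finset.sum_le_sum fun i _ => abs_sub_le _ _ _
  linarith


open MeasureTheory in
/-- PAC-style guarantee for the final answer.
On a probability space, if the per-instance trajectories satisfy the run-length KL
bound and post-stop contraction, the calibration condition
`Ω·√(δ/2) + (1/(1−α))·√(δ/2) < q/2` holds, and the margin event `{M ≥ q}` has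
probability at least `1 − β`, then with probability at least `1 − β` the stopping-time
argmax `i*(x)` remains the unique maximizer of `p x (t+s)` for all `s ≥ 0`. -/
theorem pac_guarantee_final_answer
    {X : Type*} [MeasurableSpace X] (μ : Measure X) [IsProbabilityMeasure μ]
    {ι : Type*} [Fintype ι] [Nonempty ι] [DecidableEq ι]
    (α δ : ℝ) (hα : α ∈ Set.Ico (0 : ℝ) 1) (hδ : 0 ≤ δ)
    (Ω t : ℕ) (hΩ : 1 ≤ Ω) (ht : Ω ≤ t)
    (β qv : ℝ) (hβ : β ∈ Set.Icc (0 : ℝ) 1) (hqv : 0 < qv)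
    (p : X → ℕ → ι → ℝ)
    (hprob : ∀ x u, IsProbDist (p x u)) (hpos : ∀ x u i, 0 < p x u i)
    (hKL : ∀ x, ∀ r ∈ Finset.Icc (t - Ω + 1) t, KL (p x r) (p x (r - 1)) ≤ δ)
    (hcontr : ∀ x, ∀ r ≥ t, TV (p x (r + 1)) (p x r) ≤ α * TV (p x r) (p x (r - 1)))
    (iStar : X → ι) (hne : ∀ x, (Finset.univ.erase (iStar x)).Nonempty)
    (hmax : ∀ x, ∀ j ≠ iStar x, p x t j < p x t (iStar x))
    (M : X → ℝ)
    (hM : ∀ x, M x =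
      p x t (iStar x) - (Finset.univ.erase (iStar x)).sup' (hne x) (p x t))
    (hcalib : (Ω : ℝ) * Real.sqrt (δ / 2) + 1 / (1 - α) * Real.sqrt (δ / 2) < qv / 2)
    (hEmeas : MeasurableSet {x | qv ≤ M x})
    (hEprob : ENNReal.ofReal (1 - β) ≤ μ {x | qv ≤ M x})
    (hAmeas : MeasurableSet
      {x | ∀ s : ℕ, ∀ j ≠ iStar x, p x (t + s) j < p x (t + s) (iStar x)}) :
    ENNReal.ofReal (1 - β) ≤
      μ {x | ∀ s : ℕ, ∀ j ≠ iStar x, p x (t + s) j < p x (t + s) (iStar x)} := by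
  obtain ⟨hα0, hα1⟩ := hα
  have h1α : (0:ℝ) < 1 - α := by linarith
  refine le_trans hEprob (measure_mono ?_)
  intro x hx
  simp only [Set.mem_setOf_eq] at hx ⊢
  -- set up per-instance quantities
  set D : ℝ := TV (p x t) (p x (t-1)) with hD
  have hD0 : 0 ≤ D := TV_nonneg _ _
  -- Pinsker at r = t
  have hDle : D ≤ Real.sqrt (δ / 2) := by
    have hmem : t ∈ Finset.Icc (t - Ω + 1) t := by
      rw [Finset.mem_Icc]
      omega
    have hklt := hKL x t hmem
    have hpin := pinsker (p x t) (p x (t-1)) (hprob x t) (hprob x (t-1))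
      (hpos x t) (hpos x (t-1))
    refine le_trans hpin ?_
    exact Real.sqrt_le_sqrt (by linarith)
  -- geometric decay of single steps
  have hstep : ∀ u : ℕ, TV (p x (t+u+1)) (p x (t+u)) ≤ α^u * (α * D) := by
    intro u
    induction u with
    | zero =>
      have := hcontr x t le_rfl
      simpa using this
    | succ n ih =>
      have h2 := hcontr x (t+n+1) (by omega)
      have h3 : (t+n+1) - 1 = t+n := by omega
      rw [h3] at h2
      have : t + (n+1) = t + n + 1 := by omega
      rw [this]
      calc TV (p x (t+n+1+1)) (p x (t+n+1)) ≤ α * TV (p x (t+n+1)) (p x (t+n)) := h2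
        _ ≤ α * (α^n * (α * D)) := by
            exact mul_le_mul_of_nonneg_left ih hα0
        _ = α^(n+1) * (α * D) := by ring
  -- cumulative deviation
  have hcum : ∀ s : ℕ, TV (p x (t+s)) (p x t) ≤ (∑ u ∈ Finset.range s, α^u) * (α * D) := by
    intro s
    induction s with
    | zero => simp [TV_self]
    | succ n ih =>
      have htri := TV_triangle (p x (t+n+1)) (p x (t+n)) (p x t)
      have : t + (n+1) = t + n + 1 := by omega
      rw [this]
      calc TV (p x (t+n+1)) (p x t)
          ≤ TV (p x (t+n+1)) (p x (t+n)) + TV (p x (t+n)) (p x t) := htri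
        _ ≤ α^n * (α * D) + (∑ u ∈ Finset.range n, α^u) * (α * D) := by
            exact add_le_add (hstep n) ih
        _ = (∑ u ∈ Finset.range (n+1), α^u) * (α * D) := by
            rw [Finset.sum_range_succ]; ring
  -- bound the geometric sum
  have hgeom : ∀ s : ℕ, (∑ u ∈ Finset.range s, α^u) ≤ 1 / (1 - α) := by
    intro s
    rw [geom_sum_eq (ne_of_lt hα1)]
    have hrw : (α^s - 1)/(α - 1) = (1 - α^s)/(1 - α) := by
      rw [← neg_div_neg_eq]
      ring_nf
    rw [hrw, div_le_div_iff₀ h1α h1α]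
    have hαs : 0 ≤ α^s := pow_nonneg hα0 s
    nlinarith [mul_nonneg hαs h1α.le]
  -- final TV bound
  have hTVb : ∀ s : ℕ, TV (p x (t+s)) (p x t) < qv / 2 := by
    intro s
    have h4 : TV (p x (t+s)) (p x t) ≤ (1/(1-α)) * (α * D) :=
      le_trans (hcum s) (mul_le_mul_of_nonneg_right (hgeom s)
        (mul_nonneg hα0 hD0))
    have h5 : (1/(1-α)) * (α * D) ≤ (1/(1-α)) * D := by
      apply mul_le_mul_of_nonneg_left _ (by positivity)
      nlinarith
    have h6 : (1/(1-α)) * D ≤ (1/(1-α)) * Real.sqrt (δ/2) := by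
      apply mul_le_mul_of_nonneg_left hDle (by positivity)
    have h7 : (0:ℝ) ≤ (Ω:ℝ) * Real.sqrt (δ/2) := by positivity
    linarith
  -- pointwise margin argument
  intro s j hj
  have hjmem : j ∈ Finset.univ.erase (iStar x) := by
    rw [Finset.mem_erase]
    exact ⟨hj, Finset.mem_univ j⟩
  have hsup : p x t j ≤ (Finset.univ.erase (iStar x)).sup' (hne x) (p x t) :=
    Finset.le_sup' (p x t) hjmem
  have hmargin : qv ≤ p x t (iStar x) - p x t j := by
    have := hM x
    have := hx
    linarith [hM x ▸ hx]
  -- two-coordinate deviation bound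
  have hpair : |p x (t+s) (iStar x) - p x t (iStar x)| + |p x (t+s) j - p x t j|
      ≤ 2 * TV (p x (t+s)) (p x t) := by
    have hsub : ({iStar x, j} : Finset ι) ⊆ Finset.univ := Finset.subset_univ _
    have hps := Finset.sum_le_sum_of_subset_of_nonneg hsub
      (fun i _ _ => abs_nonneg (p x (t+s) i - p x t i))
    rw [Finset.sum_pair (Ne.symm hj)] at hps
    rw [TV]
    linarith
  have habs1 := abs_sub_abs_le_abs_sub (p x (t+s) (iStar x)) (p x t (iStar x))
  have h8 : p x t (iStar x) - |p x (t+s) (iStar x) - p x t (iStar x)| ≤ p x (t+s) (iStar x) := by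
    have := neg_abs_le (p x (t+s) (iStar x) - p x t (iStar x))
    linarith
  have h9 : p x (t+s) j ≤ p x t j + |p x (t+s) j - p x t j| := by
    have := le_abs_self (p x (t+s) j - p x t j)
    linarith
  have hTVs := hTVb s
  linarith
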